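/- Let h be a polynomial in k[p] over a field k of characteristic zero. Define sequences of polynomials h_(n) and h_[n] by h_(0)=h_[0]=1, h_(n) = -h·h_(n-1) + h_(n-1)', and h_[n] = h·h_[n-1] + h_[n-1]'. Then for every k ≥ 0 and every ξ ≤ k, the sum over s from ξ to k of C(k-ξ, s-ξ)·h_[s-ξ]·h_(k-s) equals 0 if ξ < k and equals 1 if ξ = k. -/
import Mathlib


open Polynomial Finset

noncomputable section

variable {k : Type*} [Field k] [CharZero k]

/-- The sequence `h_(n)`:  `h_(0) = 1`, `h_(n) = -h·h_(n-1) + h_(n-1)'`. -/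
def hpar (h : Polynomial k) : ℕ → Polynomial k
  | 0 => 1
  | n + 1 => -h * hpar h n + derivative (hpar h n)

/-- The sequence `h_[n]`:  `h_[0] = 1`, `h_[n] = h·h_[n-1] + h_[n-1]'`. -/
def hbr (h : Polynomial k) : ℕ → Polynomial k
  | 0 => 1
  | n + 1 => h * hbr h n + derivative (hbr h n)

lemma hbr_hpar_deriv (h : Polynomial k) (j m : ℕ) :
    derivative (hbr h j * hpar h m) = hbr h (j+1) * hpar h m + hbr h j * hpar h (m+1) := by
  simp only [hbr, hpar, derivative_mul]
  ring

lemma S_succ (h : Polynomial k) (n : ℕ) :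
    (∑ j ∈ range (n+2), ((n+1).choose j : Polynomial k) * hbr h j * hpar h (n+1-j))
  = derivative (∑ j ∈ range (n+1), (n.choose j : Polynomial k) * hbr h j * hpar h (n-j)) := by
  rw [derivative_sum]
  have hterm : ∀ j ∈ range (n+1),
      derivative ((n.choose j : Polynomial k) * hbr h j * hpar h (n-j))
      = (n.choose j : Polynomial k) * hbr h (j+1) * hpar h (n-j)
        + (n.choose j : Polynomial k) * hbr h j * hpar h (n+1-j) := by
    intro j hj
    have hj' : j ≤ n := by simpa using Nat.lt_succ_iff.mp (mem_range.mp hj)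
    have h1 : n + 1 - j = (n - j) + 1 := by omega
    rw [mul_assoc, derivative_mul, derivative_natCast, zero_mul, zero_add,
      hbr_hpar_deriv, h1]
    ring
  rw [sum_congr rfl hterm, sum_add_distrib]
  -- handle RHS second sum: shift index
  have h2 : ∑ j ∈ range (n+1), (n.choose j : Polynomial k) * hbr h j * hpar h (n+1-j)
      = (∑ j ∈ range n, (n.choose (j+1) : Polynomial k) * hbr h (j+1) * hpar h (n-j))
        + hpar h (n+1) := by
    rw [Finset.sum_range_succ']
    congr 1
    · refine Finset.sum_congr rfl fun j hj => ?_
      have : n + 1 - (j + 1) = n - j := by omega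
      rw [this]
    · simp [hbr]
  have h3 : ∑ j ∈ range n, (n.choose (j+1) : Polynomial k) * hbr h (j+1) * hpar h (n-j)
      = ∑ j ∈ range (n+1), (n.choose (j+1) : Polynomial k) * hbr h (j+1) * hpar h (n-j) := by
    rw [Finset.sum_range_succ, Nat.choose_succ_self]
    simp
  rw [h2, h3]
  -- LHS
  rw [Finset.sum_range_succ' (fun j => ((n+1).choose j : Polynomial k) * hbr h j * hpar h (n+1-j))]
  have h4 : ∀ j ∈ range (n+1),
      ((n+1).choose (j+1) : Polynomial k) * hbr h (j+1) * hpar h (n+1-(j+1))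
      = (n.choose j : Polynomial k) * hbr h (j+1) * hpar h (n-j)
        + (n.choose (j+1) : Polynomial k) * hbr h (j+1) * hpar h (n-j) := by
    intro j hj
    have : n + 1 - (j + 1) = n - j := by omega
    rw [this, Nat.choose_succ_succ, Nat.cast_add]
    ring
  rw [sum_congr rfl h4, sum_add_distrib]
  simp [hbr]
  ring

lemma S_eq (h : Polynomial k) (n : ℕ) :
    (∑ j ∈ range (n+1), (n.choose j : Polynomial k) * hbr h j * hpar h (n-j))
      = if n = 0 then 1 else 0 := by
  induction n with
  | zero => simp [hbr, hpar]
  | succ n ih =>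
      have := S_succ h n
      rw [show n + 1 + 1 = n + 2 from rfl] at *
      rw [this, ih]
      rcases eq_or_ne n 0 with h0 | h0 <;> simp [h0]

theorem sum_hbr_hpar (h : Polynomial k) (K ξ : ℕ) (hle : ξ ≤ K) :
    ∑ s ∈ Finset.Icc ξ K,
        (((K - ξ).choose (s - ξ) : Polynomial k) * hbr h (s - ξ) * hpar h (K - s))
      = if ξ < K then 0 else 1 := by
  set n := K - ξ with hn
  rw [← Finset.Ico_add_one_right_eq_Icc, Finset.sum_Ico_eq_sum_range]
  have hK : K + 1 - ξ = n + 1 := by omega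
  rw [hK]
  have hcongr : ∀ j ∈ range (n+1),
      ((n.choose (ξ + j - ξ) : Polynomial k) * hbr h (ξ + j - ξ) * hpar h (K - (ξ + j)))
      = (n.choose j : Polynomial k) * hbr h j * hpar h (n - j) := by
    intro j hj
    have h1 : ξ + j - ξ = j := by omega
    have h2 : K - (ξ + j) = n - j := by omega
    rw [h1, h2]
  rw [sum_congr rfl hcongr, S_eq]
  rcases eq_or_ne n 0 with h0 | h0
  · have hx : ¬ ξ < K := by omega
    simp [h0, hx]
  · have hx : ξ < K := by omega
    simp [h0, hx]

end
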